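/- Let r : S → ℝ and r̄ : S̄ → ℝ be bounded measurable reward functions, let K̄ ≥ 0, and let L_R = ∫ |r(s) − r̄(φ(s))| dξ(s). Assume that (i) for every s ∈ S, d(inl s, inr φ(s)) ≤ (1−γ)|r(s) − r̄(φ(s))| + γ · W_d(κ(inl s), κ(inr φ(s))), (ii) d(inr x̄, inr ȳ) ≤ K̄ for all x̄, ȳ ∈ S̄, and (iii) singletons of S are measurable. If s₁, s₂ ∈ S satisfy φ(s₁) = φ(s₂), ξ({s₁}) > 0 and ξ({s₂}) > 0, then d(inl s₁, inl s₂) ≤ (L_R + γ K̄ L_P/(1−γ)) · (ξ({s₁})⁻¹ + ξ({s₂})⁻¹). -/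

import Mathlib

/-!
Write `g s = d (inl s) (inr (φ s))` for the distance of a state to its abstraction. Testing the
Wasserstein term against a `d`-Lipschitz `f`, the coupling `s ↦ (inl s, inr (φ s))` of `P s`
with its image bounds it by `∫ g ∂(P s)` plus `K̄` times the total variation between
`φ∗(P s)` and `P̄ (φ s)`, since `f ∘ inr` oscillates by at most `K̄` on the finite latent space.
Integrating hypothesis (i) against the invariant `ξ` turns `∫ g ∂(P s)` back into `∫ g ∂ξ`, so
`∫ g ∂ξ ≤ (1 - γ) L_R + γ (∫ g ∂ξ + K̄ L_P)`, i.e. `∫ g ∂ξ ≤ L_R + γ K̄ L_P / (1 - γ)`. Finally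
`g s ≤ (∫ g ∂ξ) / ξ {s}`, and the triangle inequality through `inr (φ s₁) = inr (φ s₂)` bounds
`d (inl s₁) (inl s₂)` by `g s₁ + g s₂`.
-/

open MeasureTheory ProbabilityTheory

/-- Total variation distance between two measures on `X`:
the supremum over measurable sets of the absolute difference of their masses. -/
noncomputable def tvDist {X : Type*} [MeasurableSpace X] (μ ν : Measure X) : ℝ :=
  ⨆ A : {A : Set X // MeasurableSet A}, |(μ A.1).toReal - (ν A.1).toReal|

/-- Dual (Kantorovich) Wasserstein distance between two measures with respect to a cost
function `d`: the supremum over bounded measurable `d`-Lipschitz functions of the absolute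
difference of their integrals. -/
noncomputable def wassDual {X : Type*} [MeasurableSpace X] (d : X → X → ℝ)
    (μ ν : Measure X) : ℝ :=
  ⨆ f : {f : X → ℝ // Measurable f ∧ (∃ C, ∀ x, |f x| ≤ C) ∧ ∀ x y, |f x - f y| ≤ d x y},
    |(∫ x, f.1 x ∂μ) - ∫ x, f.1 x ∂ν|

section TotalVariation

variable {X : Type*} [MeasurableSpace X]

lemma tvDist_nonneg (μ ν : Measure X) : 0 ≤ tvDist μ ν :=
  Real.iSup_nonneg fun _ => abs_nonneg _

lemma tvDist_comm (μ ν : Measure X) : tvDist μ ν = tvDist ν μ := by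
  simp only [tvDist, abs_sub_comm]

variable (μ ν : Measure X) [IsProbabilityMeasure μ] [IsProbabilityMeasure ν]

lemma abs_measureReal_sub_le_one (A : Set X) : |μ.real A - ν.real A| ≤ 1 :=
  abs_sub_le_iff.2
    ⟨by linarith [measureReal_le_one (μ := μ) (s := A), measureReal_nonneg (μ := ν) (s := A)],
      by linarith [measureReal_le_one (μ := ν) (s := A), measureReal_nonneg (μ := μ) (s := A)]⟩

lemma tvDist_le_one : tvDist μ ν ≤ 1 :=
  Real.iSup_le (fun A => abs_measureReal_sub_le_one μ ν A.1) zero_le_one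

lemma abs_measureReal_sub_le_tvDist {A : Set X} (hA : MeasurableSet A) :
    |μ.real A - ν.real A| ≤ tvDist μ ν :=
  le_ciSup (f := fun A : {A : Set X // MeasurableSet A} => |μ.real A.1 - ν.real A.1|)
    ⟨1, Set.forall_mem_range.2 fun A => abs_measureReal_sub_le_one μ ν A.1⟩ ⟨A, hA⟩

end TotalVariation

lemma Measurable.tvDist {α X : Type*} [MeasurableSpace α] [MeasurableSpace X]
    [Countable {A : Set X // MeasurableSet A}] {μ ν : α → Measure X}
    (hμ : Measurable μ) (hν : Measurable ν) : Measurable fun a => tvDist (μ a) (ν a) :=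
  Measurable.iSup fun A =>
    (((Measure.measurable_coe A.2).comp hμ).ennreal_toReal.sub
      ((Measure.measurable_coe A.2).comp hν).ennreal_toReal).abs

lemma integrable_tvDist {α X : Type*} [MeasurableSpace α] [MeasurableSpace X]
    [Countable {A : Set X // MeasurableSet A}] {μ ν : α → Measure X}
    [∀ a, IsProbabilityMeasure (μ a)] [∀ a, IsProbabilityMeasure (ν a)]
    (hμ : Measurable μ) (hν : Measurable ν) (ξ : Measure α) [IsFiniteMeasure ξ] :
    Integrable (fun a => tvDist (μ a) (ν a)) ξ := by
  refine .of_bound (hμ.tvDist hν).aestronglyMeasurable 1 (ae_of_all _ fun a => ?_)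
  rw [Real.norm_of_nonneg (tvDist_nonneg _ _)]
  exact tvDist_le_one _ _

section FiniteSpace

variable {Y : Type*} [Fintype Y] [MeasurableSpace Y] [DiscreteMeasurableSpace Y]
  (μ ν : Measure Y) [IsProbabilityMeasure μ] [IsProbabilityMeasure ν]

lemma integral_sub_integral_le_mul_tvDist {h : Y → ℝ} {K : ℝ} (hK : ∀ x y, |h x - h y| ≤ K) :
    ∫ x, h x ∂μ - ∫ x, h x ∂ν ≤ K * tvDist μ ν := by
  classical
  have := nonempty_of_isProbabilityMeasure μ
  obtain ⟨x₀, -, hx₀⟩ := Finset.univ.exists_min_image h Finset.univ_nonempty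
  have hK0 : 0 ≤ K := (abs_nonneg _).trans (hK x₀ x₀)
  set A := Finset.univ.filter fun x => ν.real {x} ≤ μ.real {x}
  -- centring `h` at its minimum makes the terms where `ν` exceeds `μ` nonpositive
  calc ∫ x, h x ∂μ - ∫ x, h x ∂ν
      = ∑ x, (μ.real {x} - ν.real {x}) * (h x - h x₀) := by
        simp only [integral_fintype Integrable.of_finite, smul_eq_mul, sub_mul, mul_sub,
          Finset.sum_sub_distrib, ← Finset.sum_mul, sum_measureReal_singleton, Finset.coe_univ,
          probReal_univ]
        ring
    _ ≤ ∑ x, K * (if ν.real {x} ≤ μ.real {x} then μ.real {x} - ν.real {x} else 0) := by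
        refine Finset.sum_le_sum fun x _ => ?_
        have h0 : 0 ≤ h x - h x₀ := sub_nonneg.2 (hx₀ x (Finset.mem_univ x))
        have hle : h x - h x₀ ≤ K := (le_abs_self _).trans (hK x x₀)
        split_ifs with hx <;> nlinarith
    _ = K * (μ.real A - ν.real A) := by
        rw [← Finset.mul_sum, ← Finset.sum_filter, Finset.sum_sub_distrib,
          sum_measureReal_singleton, sum_measureReal_singleton]
    _ ≤ K * tvDist μ ν :=
        mul_le_mul_of_nonneg_left
          ((le_abs_self _).trans (abs_measureReal_sub_le_tvDist μ ν (.of_discrete))) hK0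

lemma abs_integral_sub_integral_le_mul_tvDist {h : Y → ℝ} {K : ℝ}
    (hK : ∀ x y, |h x - h y| ≤ K) :
    |∫ x, h x ∂μ - ∫ x, h x ∂ν| ≤ K * tvDist μ ν :=
  abs_sub_le_iff.2 ⟨integral_sub_integral_le_mul_tvDist μ ν hK,
    tvDist_comm μ ν ▸ integral_sub_integral_le_mul_tvDist ν μ hK⟩

end FiniteSpace

lemma abs_integral_comp_sub_integral_comp_le {α X : Type*} [MeasurableSpace α] [MeasurableSpace X]
    {μ : Measure α} [IsFiniteMeasure μ] {d : X → X → ℝ} {f : X → ℝ} (hf : Measurable f)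
    (hfb : ∃ C, ∀ x, |f x| ≤ C) (hfd : ∀ x y, |f x - f y| ≤ d x y) {u v : α → X}
    (hu : Measurable u) (hv : Measurable v) (hd : Integrable (fun a => d (u a) (v a)) μ) :
    |∫ a, f (u a) ∂μ - ∫ a, f (v a) ∂μ| ≤ ∫ a, d (u a) (v a) ∂μ := by
  obtain ⟨C, hC⟩ := hfb
  have hfi : ∀ w : α → X, Measurable w → Integrable (fun a => f (w a)) μ := fun w hw =>
    .of_bound (hf.comp hw).aestronglyMeasurable C (ae_of_all _ fun a => hC (w a))
  rw [← integral_sub (hfi u hu) (hfi v hv)]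
  exact abs_integral_le_integral_abs.trans
    (integral_mono ((hfi u hu).sub (hfi v hv)).abs hd fun a => hfd _ _)

lemma wassDual_map_inl_map_inr_le {S Y : Type*} [MeasurableSpace S] [Fintype Y] [MeasurableSpace Y]
    [DiscreteMeasurableSpace Y] {d : S ⊕ Y → S ⊕ Y → ℝ} (hd0 : ∀ x y, 0 ≤ d x y) {K : ℝ}
    (hdK : ∀ x y : Y, d (.inr x) (.inr y) ≤ K) {φ : S → Y} (hφ : Measurable φ)
    (μ : Measure S) [IsProbabilityMeasure μ] (ν : Measure Y) [IsProbabilityMeasure ν]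
    (hint : Integrable (fun s => d (.inl s) (.inr (φ s))) μ) :
    wassDual d (μ.map .inl) (ν.map .inr) ≤
      ∫ s, d (.inl s) (.inr (φ s)) ∂μ + K * tvDist (μ.map φ) ν := by
  have := Measure.isProbabilityMeasure_map (μ := μ) hφ.aemeasurable
  have : Nonempty {f : S ⊕ Y → ℝ // Measurable f ∧ (∃ C, ∀ x, |f x| ≤ C) ∧
      ∀ x y, |f x - f y| ≤ d x y} :=
    ⟨⟨0, measurable_const, ⟨0, by simp⟩, by simpa using hd0⟩⟩
  refine ciSup_le fun ⟨f, hfm, hfb, hfd⟩ => ?_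
  rw [integral_map measurable_inl.aemeasurable hfm.aestronglyMeasurable,
    integral_map measurable_inr.aemeasurable hfm.aestronglyMeasurable]
  have hcoupling := abs_integral_comp_sub_integral_comp_le hfm hfb hfd measurable_inl
    (measurable_inr.comp hφ) hint
  have htv : |∫ y, f (.inr y) ∂(μ.map φ) - ∫ y, f (.inr y) ∂ν| ≤ K * tvDist (μ.map φ) ν :=
    abs_integral_sub_integral_le_mul_tvDist _ _ fun x y => (hfd _ _).trans (hdK x y)
  rw [integral_map hφ.aemeasurable Measurable.of_discrete.aestronglyMeasurable] at htv
  exact (abs_sub_le _ _ _).trans (add_le_add hcoupling htv)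

theorem ProbabilityTheory.Kernel.Invariant.integral_integral {α E : Type*} [MeasurableSpace α]
    [NormedAddCommGroup E] [NormedSpace ℝ E] {κ : Kernel α α} [IsSFiniteKernel κ]
    {μ : Measure α} [SFinite μ] (hκ : κ.Invariant μ) {f : α → E} (hf : Integrable f μ) :
    ∫ a, ∫ x, f x ∂κ a ∂μ = ∫ x, f x ∂μ := by
  have hsnd : (μ ⊗ₘ κ).snd = μ := (Measure.snd_compProd μ κ).trans hκ
  rw [← hsnd] at hf
  rw [← Measure.integral_compProd (f := fun p => f p.2) (hf.comp_measurable measurable_snd)]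
  conv_rhs => rw [← hsnd]
  exact (integral_map measurable_snd.aemeasurable hf.aestronglyMeasurable).symm

lemma integral_le_of_le_discounted {α : Type*} [MeasurableSpace α] {κ : Kernel α α}
    [IsMarkovKernel κ] {μ : Measure α} [IsFiniteMeasure μ] (hκ : κ.Invariant μ)
    {γ : ℝ} (hγ1 : γ < 1) {g u t : α → ℝ} (hg : Measurable g) {C : ℝ}
    (hgC : ∀ x, |g x| ≤ C) (hu : Integrable u μ) (ht : Integrable t μ)
    (h : ∀ x, g x ≤ (1 - γ) * u x + γ * (∫ y, g y ∂κ x + t x)) :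
    ∫ x, g x ∂μ ≤ ∫ x, u x ∂μ + γ * (∫ x, t x ∂μ) / (1 - γ) := by
  have hgi : Integrable g μ := .of_bound hg.aestronglyMeasurable C (ae_of_all _ hgC)
  have hκg : Integrable (fun x => ∫ y, g y ∂κ x) μ := by
    refine .of_bound hg.stronglyMeasurable.integral_kernel.aestronglyMeasurable C
      (ae_of_all _ fun x => ?_)
    simpa using norm_integral_le_of_norm_le_const (μ := κ x) (f := g) (ae_of_all _ hgC)
  have hκgt : Integrable (fun x => ∫ y, g y ∂κ x + t x) μ := hκg.add ht
  have hmain : ∫ x, g x ∂μ ≤ (1 - γ) * ∫ x, u x ∂μ + γ * (∫ x, g x ∂μ + ∫ x, t x ∂μ) :=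
    calc ∫ x, g x ∂μ ≤ ∫ x, (1 - γ) * u x + γ * (∫ y, g y ∂κ x + t x) ∂μ :=
          integral_mono hgi ((hu.const_mul _).add (hκgt.const_mul _)) h
      _ = _ := by
          rw [integral_add (hu.const_mul _) (hκgt.const_mul _), integral_const_mul,
            integral_const_mul, integral_add hκg ht, hκ.integral_integral hgi]
  rw [← sub_le_iff_le_add', le_div_iff₀ (by linarith)]
  linear_combination hmain

lemma le_integral_mul_inv_measureReal_singleton {α : Type*} [MeasurableSpace α]
    [MeasurableSingletonClass α] {μ : Measure α} {f : α → ℝ} (hf : Integrable f μ) (hf0 : 0 ≤ f)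
    {a : α} (ha : 0 < μ.real {a}) : f a ≤ (∫ x, f x ∂μ) * (μ.real {a})⁻¹ := by
  rw [le_mul_inv_iff₀ ha, mul_comm, ← smul_eq_mul, ← integral_singleton]
  exact setIntegral_le_integral hf (ae_of_all _ hf0)

theorem bisimulation_closeness_rewards_general
    {S : Type*} [MeasurableSpace S] [MeasurableSingletonClass S]
    {Sb : Type*} [Fintype Sb] [MeasurableSpace Sb] [DiscreteMeasurableSpace Sb]
    (P : Kernel S S) [IsMarkovKernel P]
    (Pb : Sb → PMF Sb)
    (φ : S → Sb) (hφ : Measurable φ)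
    (ξ : Measure S) [IsProbabilityMeasure ξ]
    (hinv : ∀ A : Set S, MeasurableSet A → ξ A = ∫⁻ s, P s A ∂ξ)
    (γ : ℝ) (hγ0 : 0 ≤ γ) (hγ1 : γ < 1)
    (d : (S ⊕ Sb) → (S ⊕ Sb) → ℝ)
    (hdmeas : Measurable (Function.uncurry d))
    (hd01 : ∀ x y, d x y ∈ Set.Icc (0 : ℝ) 1)
    (hdsymm : ∀ x y, d x y = d y x)
    (hdtri : ∀ x y z, d x z ≤ d x y + d y z)
    (r : S → ℝ) (hrmeas : Measurable r) (hrbdd : ∃ C, ∀ s, |r s| ≤ C)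
    (rb : Sb → ℝ)
    (Kb : ℝ)
    (hfix : ∀ s : S,
      d (Sum.inl s) (Sum.inr (φ s)) ≤
        (1 - γ) * |r s - rb (φ s)| +
          γ * wassDual d (((P s).map Sum.inl : Measure (S ⊕ Sb)))
            (((Pb (φ s)).toMeasure.map Sum.inr : Measure (S ⊕ Sb))))
    (hdK : ∀ x y : Sb, d (Sum.inr x) (Sum.inr y) ≤ Kb)
    (s₁ s₂ : S) (hφeq : φ s₁ = φ s₂)
    (hs₁ : 0 < ξ {s₁}) (hs₂ : 0 < ξ {s₂}) :
    d (Sum.inl s₁) (Sum.inl s₂) ≤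
      ((∫ s, |r s - rb (φ s)| ∂ξ) +
          γ * Kb * (∫ s, tvDist ((P s).map φ) ((Pb (φ s)).toMeasure) ∂ξ) / (1 - γ)) *
        ((ξ {s₁}).toReal⁻¹ + (ξ {s₂}).toReal⁻¹) := by
  have hPξ : P.Invariant ξ := by
    ext A hA
    rw [Measure.bind_apply hA P.aemeasurable]
    exact (hinv A hA).symm
  set g : S → ℝ := fun s => d (.inl s) (.inr (φ s))
  have hg : Measurable g := hdmeas.comp (measurable_inl.prodMk (measurable_inr.comp hφ))
  have hgC : ∀ s, |g s| ≤ 1 := fun s =>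
    abs_le.2 ⟨by linarith [(hd01 (.inl s) (.inr (φ s))).1], (hd01 _ _).2⟩
  have hgi : ∀ (μ : Measure S) [IsFiniteMeasure μ], Integrable g μ := fun μ _ =>
    .of_bound hg.aestronglyMeasurable 1 (ae_of_all _ hgC)
  have hreward : Integrable (fun s => |r s - rb (φ s)|) ξ := by
    obtain ⟨C, hC⟩ := hrbdd
    have hr : Integrable r ξ := .of_bound hrmeas.aestronglyMeasurable C (ae_of_all _ hC)
    have hrb : Integrable rb (ξ.map φ) := .of_finite
    exact (hr.sub (hrb.comp_measurable hφ)).abs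
  have := fun s => Measure.isProbabilityMeasure_map (μ := P s) hφ.aemeasurable
  have hPφ : Measurable fun s => (P s).map φ := (Measure.measurable_map φ hφ).comp P.measurable
  have hPbφ : Measurable fun s => (Pb (φ s)).toMeasure :=
    (Measurable.of_discrete (f := fun y => (Pb y).toMeasure)).comp hφ
  have hstep : ∀ s, g s ≤ (1 - γ) * |r s - rb (φ s)| +
      γ * (∫ x, g x ∂P s + Kb * tvDist ((P s).map φ) ((Pb (φ s)).toMeasure)) := fun s =>
    (hfix s).trans <| by
      gcongr
      exact wassDual_map_inl_map_inr_le (fun x y => (hd01 x y).1) hdK hφ _ _ (hgi _)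
  have hG := integral_le_of_le_discounted hPξ hγ1 hg hgC hreward
    ((integrable_tvDist hPφ hPbφ ξ).const_mul Kb) hstep
  rw [integral_const_mul, ← mul_assoc] at hG
  have hg_le : ∀ s, 0 < ξ {s} → g s ≤ (∫ x, g x ∂ξ) * (ξ {s}).toReal⁻¹ := fun s hs =>
    le_integral_mul_inv_measureReal_singleton (hgi ξ) (fun s => (hd01 _ _).1)
      (ENNReal.toReal_pos hs.ne' (measure_ne_top _ _))
  calc d (.inl s₁) (.inl s₂) ≤ g s₁ + g s₂ := by
        simpa [g, hφeq, hdsymm (.inr _)] using hdtri (.inl s₁) (.inr (φ s₁)) (.inl s₂)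
    _ ≤ (∫ x, g x ∂ξ) * ((ξ {s₁}).toReal⁻¹ + (ξ {s₂}).toReal⁻¹) := by
        rw [mul_add]
        exact add_le_add (hg_le s₁ hs₁) (hg_le s₂ hs₂)
    _ ≤ _ := by gcongr

/-- Abstraction-quality bound for the reward-based bisimulation pseudometric: two states with
the same embedding and positive stationary mass are within bisimulation distance
`(L_R + γ·K̄·L_P/(1-γ))·(ξ{s₁}⁻¹ + ξ{s₂}⁻¹)` of each other. -/
theorem bisimulation_closeness_rewards
    {S : Type*} [MeasurableSpace S] [MeasurableSingletonClass S]
    {Sb : Type*} [Fintype Sb] [Nonempty Sb] [MeasurableSpace Sb] [DiscreteMeasurableSpace Sb]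
    (P : Kernel S S) [IsMarkovKernel P]
    (Pb : Sb → PMF Sb)
    (φ : S → Sb) (hφ : Measurable φ)
    (ξ : Measure S) [IsProbabilityMeasure ξ]
    (hinv : ∀ A : Set S, MeasurableSet A → ξ A = ∫⁻ s, P s A ∂ξ)
    (γ : ℝ) (hγ0 : 0 ≤ γ) (hγ1 : γ < 1)
    (d : (S ⊕ Sb) → (S ⊕ Sb) → ℝ)
    (hdmeas : Measurable (Function.uncurry d))
    (hd01 : ∀ x y, d x y ∈ Set.Icc (0 : ℝ) 1)
    (hdrefl : ∀ x, d x x = 0)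
    (hdsymm : ∀ x y, d x y = d y x)
    (hdtri : ∀ x y z, d x z ≤ d x y + d y z)
    (r : S → ℝ) (hrmeas : Measurable r) (hrbdd : ∃ C, ∀ s, |r s| ≤ C)
    (rb : Sb → ℝ)
    (Kb : ℝ) (hKb : 0 ≤ Kb)
    (hfix : ∀ s : S,
      d (Sum.inl s) (Sum.inr (φ s)) ≤
        (1 - γ) * |r s - rb (φ s)| +
          γ * wassDual d (((P s).map Sum.inl : Measure (S ⊕ Sb)))
            (((Pb (φ s)).toMeasure.map Sum.inr : Measure (S ⊕ Sb))))
    (hdK : ∀ x y : Sb, d (Sum.inr x) (Sum.inr y) ≤ Kb)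
    (s₁ s₂ : S) (hφeq : φ s₁ = φ s₂)
    (hs₁ : 0 < ξ {s₁}) (hs₂ : 0 < ξ {s₂}) :
    d (Sum.inl s₁) (Sum.inl s₂) ≤
      ((∫ s, |r s - rb (φ s)| ∂ξ) +
          γ * Kb * (∫ s, tvDist ((P s).map φ) ((Pb (φ s)).toMeasure) ∂ξ) / (1 - γ)) *
        ((ξ {s₁}).toReal⁻¹ + (ξ {s₂}).toReal⁻¹) :=
  bisimulation_closeness_rewards_general P Pb φ hφ ξ hinv γ hγ0 hγ1 d hdmeas hd01 hdsymm hdtri r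
    hrmeas hrbdd rb Kb hfix hdK s₁ s₂ hφeq hs₁ hs₂
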